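/- arXiv:1911.04146 — 7 statements merged into one kernel-verified Lean document; each statement's English description precedes it below -/
import Mathlib

section
/- Let 0 ≤ j_1 ≤ j_2 ≤ … ≤ j_n ≤ m and let (t_0=0, t_1, …, t_m) be any payment profile such that t_{j_1} − c_{1,j_1} ≥ 0 and, for every agent i ∈ {2,…,n}, t_{j_i} − c_{i,j_i} ≥ t_{j_{i−1}} − c_{i,j_{i−1}} (in particular these hold whenever j_i is a best response for agent i). Then the principal's payoff satisfies Σ_{i=1}^n (ρ_{j_i} − t_{j_i}) ≤ Σ_{i=1}^{n−1} ( ρ_{j_i} − c_{i,j_i} − (n−i)(c_{i,j_i} − c_{i+1,j_i}) ) + ρ_{j_n} − c_{n,j_n}. -/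
/-! Write `u i = t_{j_i} - c_{i,j_i}` for the utility of agent `i` and
`d k = c_{k,j_k} - c_{k+1,j_k}` for the cost gap between consecutive agents at action `j_k`.
The incentive constraint of agent `i + 1` reads `u i + d i ≤ u (i + 1)`, so by telescoping from
`0 ≤ u 1` every agent keeps at least `∑_{k < i} d k`. Summing over the agents, the total utility
left to them is at least `∑_{k < n} (n - k) d k`, and the principal's payoff is
`∑ (ρ_{j_i} - c_{i,j_i})` minus that total utility. -/

open Finset

lemma sum_Ico_le_of_add_le_succ {n : ℕ} {u d : ℕ → ℝ} (hu : 0 ≤ u 1)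
    (hstep : ∀ i, 1 ≤ i → i < n → u i + d i ≤ u (i + 1)) :
    ∀ i, 1 ≤ i → i ≤ n → ∑ k ∈ Ico 1 i, d k ≤ u i := by
  intro i hi
  induction i, hi using Nat.le_induction with
  | base => intro; simpa using hu
  | succ i hi ih =>
    intro hin
    rw [sum_Ico_succ_top hi]
    linarith [ih (by omega), hstep i hi (by omega)]

lemma sum_Icc_sum_Ico_eq (n : ℕ) (d : ℕ → ℝ) :
    ∑ i ∈ Icc 1 n, ∑ k ∈ Ico 1 i, d k = ∑ k ∈ Ico 1 n, ((n : ℝ) - k) * d k := by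
  rw [sum_comm' (t' := Ico 1 n) (s' := fun k => Ioc k n)
    (by intro i k; simp only [mem_Icc, mem_Ico, mem_Ioc]; omega)]
  refine sum_congr rfl fun k hk => ?_
  rw [sum_const, Nat.card_Ioc, nsmul_eq_mul, Nat.cast_sub (mem_Ico.mp hk).2.le]

theorem stmt_1_general (n : ℕ) (hn : 1 ≤ n) (ρ : ℕ → ℝ) (c : ℕ → ℕ → ℝ) (t : ℕ → ℝ)
    (j : ℕ → ℕ)
    (h1 : 0 ≤ t (j 1) - c 1 (j 1))
    (hic : ∀ i, 2 ≤ i → i ≤ n → t (j (i - 1)) - c i (j (i - 1)) ≤ t (j i) - c i (j i)) :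
    ∑ i ∈ Finset.Icc 1 n, (ρ (j i) - t (j i)) ≤
      ∑ i ∈ Finset.Icc 1 (n - 1),
        (ρ (j i) - c i (j i) - ((n : ℝ) - i) * (c i (j i) - c (i + 1) (j i)))
      + (ρ (j n) - c n (j n)) := by
  set u : ℕ → ℝ := fun i => t (j i) - c i (j i)
  set d : ℕ → ℝ := fun k => c k (j k) - c (k + 1) (j k)
  have hstep : ∀ i, 1 ≤ i → i < n → u i + d i ≤ u (i + 1) := fun i hi hin => by
    have := hic (i + 1) (by omega) hin
    simp only [Nat.add_sub_cancel] at this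
    simp only [u, d]
    linarith
  have hutil : ∑ k ∈ Ico 1 n, ((n : ℝ) - k) * d k ≤ ∑ i ∈ Icc 1 n, u i := by
    rw [← sum_Icc_sum_Ico_eq]
    exact sum_le_sum fun i hi =>
      sum_Ico_le_of_add_le_succ h1 hstep i (mem_Icc.mp hi).1 (mem_Icc.mp hi).2
  have hpayoff : ∑ i ∈ Icc 1 n, (ρ (j i) - t (j i))
      = ∑ i ∈ Icc 1 n, (ρ (j i) - c i (j i)) - ∑ i ∈ Icc 1 n, u i := by
    rw [← sum_sub_distrib]
    exact sum_congr rfl fun i _ => by ring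
  have hbound : ∑ i ∈ Icc 1 (n - 1), (ρ (j i) - c i (j i) - ((n : ℝ) - i) * d i)
      + (ρ (j n) - c n (j n))
      = ∑ i ∈ Icc 1 n, (ρ (j i) - c i (j i)) - ∑ k ∈ Ico 1 n, ((n : ℝ) - k) * d k := by
    have hIcc : Icc 1 (n - 1) = Ico 1 n := by ext; simp only [mem_Icc, mem_Ico]; omega
    rw [hIcc, sum_sub_distrib, ← Ico_add_one_right_eq_Icc, sum_Ico_succ_top hn]
    ring
  rw [hpayoff, hbound]
  linarith

/-- For any weakly increasing `0 ≤ j_1 ≤ … ≤ j_n ≤ m` and any payment profile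
satisfying the incentive inequalities, the principal's payoff is at most the bound
`Σ_{i=1}^{n-1}(ρ_{j_i} - c_{i,j_i} - (n-i)(c_{i,j_i} - c_{i+1,j_i})) + ρ_{j_n} - c_{n,j_n}`. -/
theorem stmt_1 (n m : ℕ) (hn : 1 ≤ n) (ρ : ℕ → ℝ) (c : ℕ → ℕ → ℝ) (t : ℕ → ℝ)
    (j : ℕ → ℕ)
    (hρ0 : ρ 0 = 0) (hρ : ∀ k ≤ m, 0 ≤ ρ k)
    (hc0 : ∀ i, 1 ≤ i → i ≤ n → c i 0 = 0)
    (hcnn : ∀ i, 1 ≤ i → i ≤ n → ∀ k ≤ m, 0 ≤ c i k)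
    (ht0 : t 0 = 0)
    (hjm : ∀ i, 1 ≤ i → i ≤ n → j i ≤ m)
    (hjmono : ∀ i, 1 ≤ i → i < n → j i ≤ j (i + 1))
    (h1 : 0 ≤ t (j 1) - c 1 (j 1))
    (hic : ∀ i, 2 ≤ i → i ≤ n → t (j (i - 1)) - c i (j (i - 1)) ≤ t (j i) - c i (j i)) :
    ∑ i ∈ Finset.Icc 1 n, (ρ (j i) - t (j i)) ≤
      ∑ i ∈ Finset.Icc 1 (n - 1),
        (ρ (j i) - c i (j i) - ((n : ℝ) - i) * (c i (j i) - c (i + 1) (j i)))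
      + (ρ (j n) - c n (j n)) :=
  stmt_1_general n hn ρ c t j h1 hic
end

section
/- Let 0 ≤ j_1 ≤ j_2 ≤ … ≤ j_n ≤ m and let (t_0=0, t_1, …, t_m) be a payment profile such that t_{j_1} − c_{1,j_1} ≥ 0 and, for every agent i ∈ {2,…,n}, t_{j_i} − c_{i,j_i} ≥ t_{j_{i−1}} − c_{i,j_{i−1}}. Then for every agent i ∈ {1,…,n}, t_{j_i} ≥ Σ_{i'=1}^{i−1} ( c_{i',j_{i'}} − c_{i'+1,j_{i'}} ) + c_{i,j_i}. -/
/-!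
Write `u_i = t_{j_i} - c_{i,j_i}` for agent `i`'s utility at its own action. The incentive
constraint of agent `i + 1` says `u_{i+1} ≥ u_i + (c_{i,j_i} - c_{i+1,j_i})`, and `u_1 ≥ 0`,
so the inequality telescopes to `u_i ≥ Σ_{i' < i} (c_{i',j_{i'}} - c_{i'+1,j_{i'}})`.
-/

open Finset

theorem sum_Ico_le_of_add_le_succ_s2 {α : Type*} [AddCommMonoid α] [PartialOrder α]
    [IsOrderedAddMonoid α] {a d : ℕ → α} {n : ℕ} (h_one : 0 ≤ a 1)
    (h_succ : ∀ k, 1 ≤ k → k < n → a k + d k ≤ a (k + 1)) :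
    ∀ i, 1 ≤ i → i ≤ n → ∑ k ∈ Ico 1 i, d k ≤ a i := by
  intro i hi
  induction i, hi using Nat.le_induction with
  | base => exact fun _ ↦ by simpa using h_one
  | succ k hk ih =>
    intro hkn
    calc ∑ l ∈ Ico 1 (k + 1), d l = ∑ l ∈ Ico 1 k, d l + d k := sum_Ico_succ_top hk d
      _ ≤ a k + d k := add_le_add_left (ih (by omega)) _
      _ ≤ a (k + 1) := h_succ k hk hkn

theorem stmt_2_general (n : ℕ) (c : ℕ → ℕ → ℝ) (t : ℕ → ℝ)
    (j : ℕ → ℕ)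
    (h1 : 0 ≤ t (j 1) - c 1 (j 1))
    (hic : ∀ i, 2 ≤ i → i ≤ n → t (j (i - 1)) - c i (j (i - 1)) ≤ t (j i) - c i (j i)) :
    ∀ i, 1 ≤ i → i ≤ n →
      ∑ i' ∈ Finset.Icc 1 (i - 1), (c i' (j i') - c (i' + 1) (j i')) + c i (j i) ≤ t (j i) := by
  intro i hi hin
  have h_utility := sum_Ico_le_of_add_le_succ_s2 (a := fun k ↦ t (j k) - c k (j k))
    (d := fun k ↦ c k (j k) - c (k + 1) (j k)) h1
    (fun k hk hkn ↦ by simpa using hic (k + 1) (by omega) hkn) i hi hin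
  rw [Icc_sub_one_right_eq_Ico_of_not_isMin
    (not_isMin_iff_ne_bot.mpr (Nat.one_le_iff_ne_zero.mp hi))]
  linarith

/-- Under the incentive inequalities along the chain `j_1 ≤ … ≤ j_n`, the
payment for action `j_i` is at least `Σ_{i'=1}^{i-1}(c_{i',j_{i'}} - c_{i'+1,j_{i'}}) + c_{i,j_i}`. -/
theorem stmt_2 (n m : ℕ) (hn : 1 ≤ n) (ρ : ℕ → ℝ) (c : ℕ → ℕ → ℝ) (t : ℕ → ℝ)
    (j : ℕ → ℕ)
    (hρ0 : ρ 0 = 0) (hρ : ∀ k ≤ m, 0 ≤ ρ k)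
    (hc0 : ∀ i, 1 ≤ i → i ≤ n → c i 0 = 0)
    (hcnn : ∀ i, 1 ≤ i → i ≤ n → ∀ k ≤ m, 0 ≤ c i k)
    (ht0 : t 0 = 0)
    (hjm : ∀ i, 1 ≤ i → i ≤ n → j i ≤ m)
    (hjmono : ∀ i, 1 ≤ i → i < n → j i ≤ j (i + 1))
    (h1 : 0 ≤ t (j 1) - c 1 (j 1))
    (hic : ∀ i, 2 ≤ i → i ≤ n → t (j (i - 1)) - c i (j (i - 1)) ≤ t (j i) - c i (j i)) :
    ∀ i, 1 ≤ i → i ≤ n →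
      ∑ i' ∈ Finset.Icc 1 (i - 1), (c i' (j i') - c (i' + 1) (j i')) + c i (j i) ≤ t (j i) :=
  stmt_2_general n c t j h1 hic
end

section
/- Suppose the costs obey increasing differences, i.e. for all agents i < i' and all actions 0 ≤ j < j' ≤ m one has c_{i,j} − c_{i',j} < c_{i,j'} − c_{i',j'} (where c_{i,0} = 0 for every agent; in particular c_{1,j} > c_{2,j} > … > c_{n,j} for every action j ≥ 1). Given any 0 ≤ j_1 ≤ j_2 ≤ … ≤ j_n ≤ m, define the payment profile by t_j = Σ_{i'=1}^{i−1}( c_{i',j_{i'}} − c_{i'+1,j_{i'}} ) + c_{i,j_i} if j = j_i for some i (this value being independent of the choice of such i), and t_j = 0 otherwise. Then: (a) for every agent i and every action j ∈ {0,…,m}, t_j − c_{i,j} ≤ t_{j_i} − c_{i,j_i}, i.e. j_i is a best response for agent i; and (b) when each agent i takes action j_i, the principal's payoff Σ_{i=1}^n (ρ_{j_i} − t_{j_i}) equals Σ_{i=1}^{n−1} ( ρ_{j_i} − c_{i,j_i} − (n−i)(c_{i,j_i} − c_{i+1,j_i}) ) + ρ_{j_n} − c_{n,j_n}. -/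
/-!
The payments are `t_{j_i} = c_{i,j_i} + R i`, where `R i = Σ_{1 ≤ k < i} (c_{k,j_k} - c_{k+1,j_k})`
(`rent c j i`) is agent `i`'s utility. Deviating to `j_k` changes it by a telescoping sum: for
`k < i`, `R i - R k` dominates `Σ_{k ≤ x < i} (c_{x,j_k} - c_{x+1,j_k}) = c_{k,j_k} - c_{i,j_k}`
because `j_k ≤ j_x` and the cost differences increase in the action; for `k > i` the inequality
is reversed. Unused actions pay nothing, and the rents are nonnegative since the differences vanish
at the zero action. The payoff formula follows by exchanging the order of summation in `Σ_i R i`.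
-/

open Finset

lemma sum_Ico_sub' (f : ℕ → ℝ) {k i : ℕ} (hki : k ≤ i) :
    ∑ x ∈ Ico k i, (f x - f (x + 1)) = f k - f i := by
  simpa only [neg_sub_neg] using sum_Ico_sub (fun x => -f x) hki

lemma sum_Icc_sum_Ico_eq_sum_mul (d : ℕ → ℝ) (N : ℕ) :
    ∑ i ∈ Icc 1 N, ∑ k ∈ Ico 1 i, d k = ∑ k ∈ Ico 1 N, ((N : ℝ) - k) * d k := by
  rw [sum_comm' (t' := Ico 1 N) (s' := fun k => Ioc k N)
    (by intros; simp only [mem_Icc, mem_Ico, mem_Ioc]; omega)]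
  refine sum_congr rfl fun k hk => ?_
  rw [sum_const, Nat.card_Ioc, nsmul_eq_mul, Nat.cast_sub (mem_Ico.mp hk).2.le]

def rent (c : ℕ → ℕ → ℝ) (j : ℕ → ℕ) (i : ℕ) : ℝ :=
  ∑ k ∈ Ico 1 i, (c k (j k) - c (k + 1) (j k))

section

variable {n m : ℕ} {c : ℕ → ℕ → ℝ} {j : ℕ → ℕ}

lemma rent_sub_rent {k i : ℕ} (hk : 1 ≤ k) (hki : k ≤ i) :
    rent c j i - rent c j k = ∑ x ∈ Ico k i, (c x (j x) - c (x + 1) (j x)) := by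
  rw [rent, rent, ← sum_Ico_consecutive _ hk hki, add_sub_cancel_left]

lemma rent_nonneg (hc0 : ∀ x ∈ Set.Icc 1 n, c x 0 = 0)
    (hD : ∀ x ∈ Set.Ico 1 n, MonotoneOn (fun a => c x a - c (x + 1) a) (Set.Iic m))
    (hjm : ∀ i ∈ Set.Icc 1 n, j i ≤ m) {i : ℕ} (hi : i ≤ n) : 0 ≤ rent c j i := by
  refine sum_nonneg fun x hx => ?_
  obtain ⟨hx1, hxi⟩ := mem_Ico.mp hx
  have h := hD x ⟨hx1, by omega⟩ m.zero_le (hjm x ⟨hx1, by omega⟩) (j x).zero_le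
  simpa only [hc0 x ⟨hx1, by omega⟩, hc0 (x + 1) ⟨by omega, by omega⟩, sub_zero] using h

lemma rent_add_cost_sub_le
    (hD : ∀ x ∈ Set.Ico 1 n, MonotoneOn (fun a => c x a - c (x + 1) a) (Set.Iic m))
    (hj : MonotoneOn j (Set.Icc 1 n)) (hjm : ∀ i ∈ Set.Icc 1 n, j i ≤ m) {i k : ℕ}
    (hi : i ∈ Set.Icc 1 n) (hk : k ∈ Set.Icc 1 n) :
    rent c j k + c k (j k) - c i (j k) ≤ rent c j i := by
  have hD' {x a a' : ℕ} (hx : x ∈ Set.Ico 1 n) (haa' : a ≤ a') (ha' : a' ≤ m) :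
      c x a - c (x + 1) a ≤ c x a' - c (x + 1) a' :=
    hD x hx (haa'.trans ha') ha' haa'
  obtain ⟨hi1, hin⟩ := hi
  obtain ⟨hk1, hkn⟩ := hk
  rcases le_total k i with hki | hik
  · have hle : c k (j k) - c i (j k) ≤ rent c j i - rent c j k := by
      rw [rent_sub_rent hk1 hki, ← sum_Ico_sub' (fun x => c x (j k)) hki]
      refine sum_le_sum fun x hx => ?_
      obtain ⟨hkx, hxi⟩ := mem_Ico.mp hx
      exact hD' ⟨by omega, by omega⟩ (hj ⟨hk1, hkn⟩ ⟨by omega, by omega⟩ hkx)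
        (hjm x ⟨by omega, by omega⟩)
    linarith
  · have hle : rent c j k - rent c j i ≤ c i (j k) - c k (j k) := by
      rw [rent_sub_rent hi1 hik, ← sum_Ico_sub' (fun x => c x (j k)) hik]
      refine sum_le_sum fun x hx => ?_
      obtain ⟨hix, hxk⟩ := mem_Ico.mp hx
      exact hD' ⟨by omega, by omega⟩ (hj ⟨by omega, by omega⟩ ⟨hk1, hkn⟩ hxk.le)
        (hjm k ⟨hk1, hkn⟩)
    linarith

end

theorem stmt_3_general (n m : ℕ) (hn : 1 ≤ n) (ρ : ℕ → ℝ) (c : ℕ → ℕ → ℝ) (j : ℕ → ℕ) (t : ℕ → ℝ)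
    (hc0 : ∀ i, 1 ≤ i → i ≤ n → c i 0 = 0)
    (hcnn : ∀ i, 1 ≤ i → i ≤ n → ∀ k ≤ m, 0 ≤ c i k)
    (hid : ∀ i i' a a', 1 ≤ i → i < i' → i' ≤ n → a < a' → a' ≤ m →
      c i a - c i' a < c i a' - c i' a')
    (hjm : ∀ i, 1 ≤ i → i ≤ n → j i ≤ m)
    (hjmono : ∀ i, 1 ≤ i → i < n → j i ≤ j (i + 1))
    (ht_hit : ∀ i, 1 ≤ i → i ≤ n →
      t (j i) = ∑ i' ∈ Finset.Icc 1 (i - 1), (c i' (j i') - c (i' + 1) (j i')) + c i (j i))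
    (ht_miss : ∀ a ≤ m, (∀ i, 1 ≤ i → i ≤ n → j i ≠ a) → t a = 0) :
    (∀ i, 1 ≤ i → i ≤ n → ∀ a ≤ m, t a - c i a ≤ t (j i) - c i (j i)) ∧
    ∑ i ∈ Finset.Icc 1 n, (ρ (j i) - t (j i)) =
      ∑ i ∈ Finset.Icc 1 (n - 1),
        (ρ (j i) - c i (j i) - ((n : ℝ) - i) * (c i (j i) - c (i + 1) (j i)))
      + (ρ (j n) - c n (j n)) := by
  have hIcc (i : ℕ) : Icc 1 (i - 1) = Ico 1 i := by ext; simp only [mem_Icc, mem_Ico]; omega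
  have ht : ∀ i ∈ Icc 1 n, t (j i) = rent c j i + c i (j i) := fun i hi => by
    rw [ht_hit i (mem_Icc.mp hi).1 (mem_Icc.mp hi).2, hIcc, rent]
  have hD : ∀ x ∈ Set.Ico 1 n, MonotoneOn (fun a => c x a - c (x + 1) a) (Set.Iic m) := by
    intro x hx a _ a' ha' haa'
    rcases haa'.eq_or_lt with rfl | h
    · rfl
    · exact (hid x (x + 1) a a' hx.1 x.lt_succ_self hx.2 h ha').le
  have hj : MonotoneOn j (Set.Icc 1 n) :=
    monotoneOn_of_le_succ Set.ordConnected_Icc fun x _ hx hx1 =>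
      hjmono x hx.1 (Order.succ_le_iff.mp hx1.2)
  have hjm' : ∀ i ∈ Set.Icc 1 n, j i ≤ m := fun i hi => hjm i hi.1 hi.2
  refine ⟨fun i hi1 hin a ha => ?_, ?_⟩
  · have hi : i ∈ Icc 1 n := mem_Icc.mpr ⟨hi1, hin⟩
    rw [ht i hi, add_sub_cancel_right]
    by_cases hit : ∃ k ∈ Icc 1 n, j k = a
    · obtain ⟨k, hk, rfl⟩ := hit
      rw [ht k hk]
      exact rent_add_cost_sub_le hD hj hjm' ⟨hi1, hin⟩ (mem_Icc.mp hk)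
    · simp only [not_exists, not_and] at hit
      rw [ht_miss a ha fun k h1 h2 => hit k (mem_Icc.mpr ⟨h1, h2⟩)]
      linarith [hcnn i hi1 hin a ha, rent_nonneg (fun x hx => hc0 x hx.1 hx.2) hD hjm' hin]
  · calc ∑ i ∈ Icc 1 n, (ρ (j i) - t (j i))
        = ∑ i ∈ Icc 1 n, (ρ (j i) - c i (j i)) - ∑ i ∈ Icc 1 n, rent c j i := by
          rw [← sum_sub_distrib]
          exact sum_congr rfl fun i hi => by rw [ht i hi]; ring
      _ = _ := by
          unfold rent
          rw [sum_Icc_sum_Ico_eq_sum_mul, hIcc, ← Ico_insert_right hn, sum_insert right_notMem_Ico]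
          simp only [sum_sub_distrib]
          ring

/-- Under increasing differences, the explicit payment profile
`t_{j_i} = Σ_{i'=1}^{i-1}(c_{i',j_{i'}} - c_{i'+1,j_{i'}}) + c_{i,j_i}` (and `t_a = 0` for
actions not of the form `j_i`) makes `j_i` a best response for agent `i`, and the resulting
principal's payoff equals the bound of Lemma 2. -/
theorem stmt_3 (n m : ℕ) (hn : 1 ≤ n) (ρ : ℕ → ℝ) (c : ℕ → ℕ → ℝ) (j : ℕ → ℕ) (t : ℕ → ℝ)
    (hρ0 : ρ 0 = 0) (hρ : ∀ k ≤ m, 0 ≤ ρ k)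
    (hc0 : ∀ i, 1 ≤ i → i ≤ n → c i 0 = 0)
    (hcnn : ∀ i, 1 ≤ i → i ≤ n → ∀ k ≤ m, 0 ≤ c i k)
    (hid : ∀ i i' a a', 1 ≤ i → i < i' → i' ≤ n → a < a' → a' ≤ m →
      c i a - c i' a < c i a' - c i' a')
    (hjm : ∀ i, 1 ≤ i → i ≤ n → j i ≤ m)
    (hjmono : ∀ i, 1 ≤ i → i < n → j i ≤ j (i + 1))
    (ht_hit : ∀ i, 1 ≤ i → i ≤ n →
      t (j i) = ∑ i' ∈ Finset.Icc 1 (i - 1), (c i' (j i') - c (i' + 1) (j i')) + c i (j i))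
    (ht_miss : ∀ a ≤ m, (∀ i, 1 ≤ i → i ≤ n → j i ≠ a) → t a = 0) :
    (∀ i, 1 ≤ i → i ≤ n → ∀ a ≤ m, t a - c i a ≤ t (j i) - c i (j i)) ∧
    ∑ i ∈ Finset.Icc 1 n, (ρ (j i) - t (j i)) =
      ∑ i ∈ Finset.Icc 1 (n - 1),
        (ρ (j i) - c i (j i) - ((n : ℝ) - i) * (c i (j i) - c (i + 1) (j i)))
      + (ρ (j n) - c n (j n)) :=
  stmt_3_general n m hn ρ c j t hc0 hcnn hid hjm hjmono ht_hit ht_miss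
end

section
/- Let c : [0,1] → [0,∞) with c(0) = 0, suppose x − c(x) attains its maximum y' over [0,1] at a point x', let 0 ≤ y ≤ y', and define t(x) = max(0, x − y) on [0,1]. Then x' is a best response of the agent to t (i.e. t(x') − c(x') = max_{x∈[0,1]} (t(x) − c(x)) = y' − y), and the payoff the agent brings to the principal by producing x' is x' − t(x') = y. -/
/-- If `0 ≤ y ≤ y'` where `y' = max_{x∈[0,1]}(x - c(x))` is attained at `x'`,
then under `t(x) = max(0, x-y)` the point `x'` is a best response, the agent's maximal
utility is `y' - y`, and the principal's payoff from this agent is `x' - t(x') = y`. -/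
theorem stmt_7 (c t : ℝ → ℝ) (x' y' y : ℝ)
    (hc0 : c 0 = 0) (hcnn : ∀ x ∈ Set.Icc (0:ℝ) 1, 0 ≤ c x)
    (hx' : x' ∈ Set.Icc (0:ℝ) 1)
    (hmax : ∀ x ∈ Set.Icc (0:ℝ) 1, x - c x ≤ x' - c x')
    (hy' : y' = x' - c x')
    (hy0 : 0 ≤ y) (hyy' : y ≤ y')
    (ht : ∀ x ∈ Set.Icc (0:ℝ) 1, t x = max 0 (x - y)) :
    (∀ x ∈ Set.Icc (0:ℝ) 1, t x - c x ≤ t x' - c x') ∧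
    t x' - c x' = y' - y ∧
    x' - t x' = y := by
  have h0 : (0:ℝ) ∈ Set.Icc (0:ℝ) 1 := by constructor <;> norm_num
  have hcx' : 0 ≤ c x' := hcnn x' hx'
  have hxy : y ≤ x' - c x' := by linarith [hyy', hy'.ge]
  have htx' : t x' = x' - y := by
    rw [ht x' hx', max_eq_right]; linarith
  refine ⟨?_, by rw [htx', hy']; ring, by rw [htx']; ring⟩
  intro x hx
  rw [ht x hx, htx']
  rcases le_or_gt (x - y) 0 with h | h
  · rw [max_eq_left h]
    have := hcnn x hx
    linarith
  · rw [max_eq_right h.le]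
    have := hmax x hx
    linarith
end

section
/- Consider n agents with cost functions c_i : [0,1] → [0,∞), c_i(0) = 0, such that x − c_i(x) attains its maximum y_i over [0,1] at a point x_i, and suppose y_1 ≤ y_2 ≤ … ≤ y_n. Fix i ∈ {1,…,n} and define the payment function t_i(x) = max(0, x − y_i) on [0,1]. Then there exists, for each agent i' ∈ {1,…,n}, a best response x''_{i'} to t_i (namely x''_{i'} = x_{i'} for i' ≥ i and x''_{i'} = 0 for i' < i) such that the principal's payoff satisfies Σ_{i'=1}^n ( x''_{i'} − t_i(x''_{i'}) ) ≥ (n − i + 1)·y_i. -/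
/-!
With `s = y_i`, the payment `max 0 (x - s)` changes an agent's best utility from `y_j` to
`max 0 (y_j - s)`, because costs are nonnegative. Agents with `y_j ≥ s` keep their maximiser `x_j`
(now earning `y_j - s`), agents with `y_j ≤ s` can do no better than producing `0`. Since
`x_j ≥ x_j - c_j(x_j) = y_j ≥ s`, each of the `n - i + 1` agents `j ≥ i` leaves exactly `s` to
the principal.
-/

open Set

lemma max_zero_sub_sub_le {x s y c : ℝ} (hc : 0 ≤ c) (hxy : x - c ≤ y) :
    max 0 (x - s) - c ≤ max 0 (y - s) := by
  rw [sub_le_iff_le_add]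
  refine max_le ?_ ?_
  · linarith [le_max_left 0 (y - s)]
  · linarith [le_max_right 0 (y - s)]

section Agent

variable {c t : ℝ → ℝ} {s : ℝ}

lemma isMaxOn_payment_sub_cost_of_le {xm y : ℝ} (ht : ∀ x ∈ Icc (0 : ℝ) 1, t x = max 0 (x - s))
    (hc : ∀ x ∈ Icc (0 : ℝ) 1, 0 ≤ c x) (hxm : xm ∈ Icc (0 : ℝ) 1) (hxmy : xm - c xm = y)
    (hy : ∀ x ∈ Icc (0 : ℝ) 1, x - c x ≤ y) (hsy : s ≤ y) :
    IsMaxOn (fun x ↦ t x - c x) (Icc 0 1) xm := by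
  intro x hx
  calc t x - c x ≤ max 0 (y - s) := by rw [ht x hx]; exact max_zero_sub_sub_le (hc x hx) (hy x hx)
    _ = y - s := max_eq_right (by linarith)
    _ ≤ t xm - c xm := by rw [ht xm hxm]; linarith [le_max_right 0 (xm - s)]

lemma isMaxOn_payment_sub_cost_zero_of_le {y : ℝ} (ht : ∀ x ∈ Icc (0 : ℝ) 1, t x = max 0 (x - s))
    (hc : ∀ x ∈ Icc (0 : ℝ) 1, 0 ≤ c x) (hc0 : c 0 = 0)
    (hy : ∀ x ∈ Icc (0 : ℝ) 1, x - c x ≤ y) (hys : y ≤ s) :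
    IsMaxOn (fun x ↦ t x - c x) (Icc 0 1) 0 := by
  have h0 : (0 : ℝ) ∈ Icc (0 : ℝ) 1 := left_mem_Icc.2 zero_le_one
  have hy0 : 0 ≤ y := by simpa [hc0] using hy 0 h0
  intro x hx
  calc t x - c x ≤ max 0 (y - s) := by rw [ht x hx]; exact max_zero_sub_sub_le (hc x hx) (hy x hx)
    _ = t 0 - c 0 := by
        rw [ht 0 h0, hc0, max_eq_left (by linarith), max_eq_left (by linarith), sub_zero]

end Agent

lemma sub_max_zero_sub_eq_of_le {x s : ℝ} (hs : s ≤ x) : x - max 0 (x - s) = s := by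
  rw [max_eq_right (sub_nonneg.2 hs), sub_sub_cancel]

lemma sum_Icc_one_ite_le_eq (n i : ℕ) (hi : 1 ≤ i) (hin : i ≤ n + 1) (a : ℝ) :
    ∑ j ∈ Finset.Icc 1 n, (if i ≤ j then a else 0) = ((n : ℝ) - i + 1) * a := by
  have hfilter : (Finset.Icc 1 n).filter (i ≤ ·) = Finset.Icc i n := by
    ext j
    simp only [Finset.mem_filter, Finset.mem_Icc]
    omega
  rw [← Finset.sum_filter, hfilter, Finset.sum_const, Nat.card_Icc, nsmul_eq_mul,
    Nat.cast_sub hin, Nat.cast_add, Nat.cast_one]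
  ring

/-- With `y_1 ≤ … ≤ y_n` and payment function `t_i(x) = max(0, x - y_i)`, there
are best responses (namely `x_{i'}` for agents `i' ≥ i` and `0` for agents `i' < i`) under which
the principal's payoff is at least `(n - i + 1)·y_i`. -/
theorem stmt_10 (n : ℕ) (c : ℕ → ℝ → ℝ) (y xm : ℕ → ℝ) (i : ℕ)
    (hc0 : ∀ i', 1 ≤ i' → i' ≤ n → c i' 0 = 0)
    (hcnn : ∀ i', 1 ≤ i' → i' ≤ n → ∀ x ∈ Set.Icc (0:ℝ) 1, 0 ≤ c i' x)
    (hxm : ∀ i', 1 ≤ i' → i' ≤ n → xm i' ∈ Set.Icc (0:ℝ) 1 ∧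
      xm i' - c i' (xm i') = y i' ∧ ∀ x ∈ Set.Icc (0:ℝ) 1, x - c i' x ≤ y i')
    (hymono : ∀ i', 1 ≤ i' → i' < n → y i' ≤ y (i' + 1))
    (hi1 : 1 ≤ i) (hin : i ≤ n)
    (t : ℝ → ℝ) (ht : ∀ x ∈ Set.Icc (0:ℝ) 1, t x = max 0 (x - y i)) :
    ∃ xs : ℕ → ℝ,
      (∀ i', 1 ≤ i' → i' ≤ n → xs i' = if i ≤ i' then xm i' else 0) ∧
      (∀ i', 1 ≤ i' → i' ≤ n → xs i' ∈ Set.Icc (0:ℝ) 1 ∧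
        ∀ x ∈ Set.Icc (0:ℝ) 1, t x - c i' x ≤ t (xs i') - c i' (xs i')) ∧
      ((n : ℝ) - i + 1) * y i ≤ ∑ i' ∈ Finset.Icc 1 n, (xs i' - t (xs i')) := by
  have hy : MonotoneOn y (Icc 1 n) := monotoneOn_of_le_succ ordConnected_Icc
    fun j _ hj hj' ↦ hymono j hj.1 (Order.succ_le_iff.1 hj'.2)
  have h0 : (0 : ℝ) ∈ Icc (0 : ℝ) 1 := left_mem_Icc.2 zero_le_one
  have hi : i ∈ Icc 1 n := ⟨hi1, hin⟩
  have hs : 0 ≤ y i := by simpa [hc0 i hi1 hin] using (hxm i hi1 hin).2.2 0 h0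
  refine ⟨fun j ↦ if i ≤ j then xm j else 0, fun _ _ _ ↦ rfl, fun j hj1 hjn ↦ ?_, ?_⟩
  · obtain ⟨hxmj, hxmj_eq, hmax⟩ := hxm j hj1 hjn
    by_cases hij : i ≤ j
    · simp only [if_pos hij]
      exact ⟨hxmj, isMaxOn_iff.1 <| isMaxOn_payment_sub_cost_of_le ht (hcnn j hj1 hjn) hxmj
        hxmj_eq hmax (hy hi ⟨hj1, hjn⟩ hij)⟩
    · simp only [if_neg hij]
      exact ⟨h0, isMaxOn_iff.1 <| isMaxOn_payment_sub_cost_zero_of_le ht (hcnn j hj1 hjn)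
        (hc0 j hj1 hjn) hmax (hy ⟨hj1, hjn⟩ hi (by omega))⟩
  · rw [← sum_Icc_one_ite_le_eq n i hi1 (by omega)]
    refine (Finset.sum_congr rfl fun j hj ↦ ?_).le
    obtain ⟨hj1, hjn⟩ := Finset.mem_Icc.1 hj
    obtain ⟨hxmj, hxmj_eq, -⟩ := hxm j hj1 hjn
    by_cases hij : i ≤ j
    · have hsx : y i ≤ xm j := calc
        y i ≤ y j := hy hi ⟨hj1, hjn⟩ hij
        _ = xm j - c j (xm j) := hxmj_eq.symm
        _ ≤ xm j := sub_le_self _ (hcnn j hj1 hjn _ hxmj)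
      simp only [if_pos hij, ht _ hxmj, sub_max_zero_sub_eq_of_le hsx]
    · simp only [if_neg hij, ht 0 h0, zero_sub, max_eq_left (neg_nonpos.2 hs), sub_zero]
end

section
/- Consider n agents with cost functions c_i : [0,1] → [0,∞), c_i(0) = 0, such that x − c_i(x) attains its maximum y_i over [0,1] at a point x_i, and suppose y_1 ≤ y_2 ≤ … ≤ y_n. Let i* ∈ {1,…,n} maximize (n − i + 1)·y_i and define t*(x) = max(0, x − y_{i*}) on [0,1]. Then there exist best responses x''_1,…,x''_n of the agents to t* such that for every payment function t : [0,1] → ℝ with t(0) ≥ 0 for which each agent has a best response, and every best responses x'_1,…,x'_n to t, the principal's payoffs satisfy Σ_{i=1}^n ( x'_i − t(x'_i) ) ≤ ( Σ_{k=1}^n 1/k ) · Σ_{i=1}^n ( x''_i − t*(x''_i) ). In other words, the payment function t* is a (Σ_{k=1}^n 1/k)-approximation, i.e. an O(log n)-approximation, to the optimal principal payoff. -/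
/-!
Under any payment function with `t 0 ≥ 0`, comparing with the action `0` shows that each agent
is paid at least its cost, so agent `i` contributes at most its maximal surplus `y_i`; and
`y_i ≤ (n - i* + 1) y_{i*} / (n - i + 1)` by the choice of `i*`, so the total is at most
`H_n (n - i* + 1) y_{i*}`. Under `t*`, agents `i ≥ i*` keep their surplus-maximizing action and
each leaves exactly `y_{i*}` to the principal, while agents `i < i*` best respond with `0`.
-/

open Finset

def IsBestResponse (c t : ℝ → ℝ) (x : ℝ) : Prop :=
  x ∈ Set.Icc (0 : ℝ) 1 ∧ ∀ x' ∈ Set.Icc (0 : ℝ) 1, t x' - c x' ≤ t x - c x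

section SingleAgent

variable {c t : ℝ → ℝ} {x y Y : ℝ}

lemma nonneg_of_forall_sub_cost_le (hc0 : c 0 = 0)
    (hy : ∀ x ∈ Set.Icc (0 : ℝ) 1, x - c x ≤ y) : 0 ≤ y := by
  simpa [hc0] using hy 0 unitInterval.zero_mem

lemma IsBestResponse.sub_le (hx : IsBestResponse c t x) (hc0 : c 0 = 0) (ht0 : 0 ≤ t 0)
    (hy : ∀ x ∈ Set.Icc (0 : ℝ) 1, x - c x ≤ y) : x - t x ≤ y := by
  have h0 := hx.2 0 unitInterval.zero_mem
  have hsurplus := hy x hx.1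
  rw [hc0] at h0
  linarith

variable (hcnn : ∀ x ∈ Set.Icc (0 : ℝ) 1, 0 ≤ c x)
  (ht : ∀ x ∈ Set.Icc (0 : ℝ) 1, t x = max 0 (x - Y))
  (hy : ∀ x ∈ Set.Icc (0 : ℝ) 1, x - c x ≤ y)
include hcnn ht hy

lemma isBestResponse_and_payoff_of_le (hY : Y ≤ y) (hxm : x ∈ Set.Icc (0 : ℝ) 1)
    (hxy : x - c x = y) : IsBestResponse c t x ∧ x - t x = Y := by
  have hcx := hcnn x hxm
  have htx : t x = x - Y := by rw [ht x hxm, max_eq_right (by linarith)]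
  refine ⟨⟨hxm, fun x' hx' => ?_⟩, by linarith⟩
  have := hcnn x' hx'
  have := hy x' hx'
  have : max 0 (x' - Y) ≤ y - Y + c x' := max_le (by linarith) (by linarith)
  rw [ht x' hx', htx]
  linarith

lemma isBestResponse_zero_and_payoff_of_ge (hc0 : c 0 = 0) (hY : y ≤ Y) :
    IsBestResponse c t 0 ∧ 0 - t 0 = 0 := by
  have hY0 := (nonneg_of_forall_sub_cost_le hc0 hy).trans hY
  have ht0 : t 0 = 0 := by rw [ht 0 unitInterval.zero_mem, max_eq_left (by linarith)]
  refine ⟨⟨unitInterval.zero_mem, fun x' hx' => ?_⟩, by simp [ht0]⟩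
  have := hcnn x' hx'
  have := hy x' hx'
  have : max 0 (x' - Y) ≤ c x' := max_le (by linarith) (by linarith)
  rw [ht x' hx', ht0, hc0]
  linarith

end SingleAgent

lemma sum_Icc_one_div_reflect (n : ℕ) :
    ∑ i ∈ Icc 1 n, 1 / ((n : ℝ) - i + 1) = ∑ k ∈ Icc 1 n, (1 : ℝ) / k := by
  refine sum_nbij' (fun i => n + 1 - i) (fun k => n + 1 - k) ?_ ?_ ?_ ?_ ?_ <;>
    intro i hi <;> simp only [mem_Icc] at hi ⊢
  · omega
  · omega
  · omega
  · omega
  · rw [Nat.cast_sub (by omega)]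
    push_cast
    ring_nf

lemma sum_le_harmonic_mul {n : ℕ} {y : ℕ → ℝ} {M : ℝ}
    (h : ∀ i ∈ Icc 1 n, ((n : ℝ) - i + 1) * y i ≤ M) :
    ∑ i ∈ Icc 1 n, y i ≤ (∑ k ∈ Icc 1 n, (1 : ℝ) / k) * M := by
  rw [← sum_Icc_one_div_reflect, sum_mul]
  refine sum_le_sum fun i hi => ?_
  have hin : (i : ℝ) ≤ n := by exact_mod_cast (mem_Icc.1 hi).2
  rw [one_div_mul_eq_div, le_div_iff₀ (by linarith), mul_comm]
  exact h i hi

lemma sum_Icc_ite_le_eq_mul {n k : ℕ} (hk1 : 1 ≤ k) (hkn : k ≤ n + 1) (a : ℝ) :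
    ∑ i ∈ Icc 1 n, (if k ≤ i then a else 0) = ((n : ℝ) - k + 1) * a := by
  have hfilter : {i ∈ Icc 1 n | k ≤ i} = Icc k n := by
    ext i
    simp only [mem_filter, mem_Icc]
    omega
  rw [sum_ite, sum_const_zero, add_zero, sum_const, hfilter, Nat.card_Icc, nsmul_eq_mul,
    Nat.cast_sub hkn]
  push_cast
  ring

theorem stmt_11_general (n : ℕ) (c : ℕ → ℝ → ℝ) (y xm : ℕ → ℝ) (istar : ℕ)
    (hc0 : ∀ i, 1 ≤ i → i ≤ n → c i 0 = 0)
    (hcnn : ∀ i, 1 ≤ i → i ≤ n → ∀ x ∈ Set.Icc (0:ℝ) 1, 0 ≤ c i x)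
    (hxm : ∀ i, 1 ≤ i → i ≤ n → xm i ∈ Set.Icc (0:ℝ) 1 ∧
      xm i - c i (xm i) = y i ∧ ∀ x ∈ Set.Icc (0:ℝ) 1, x - c i x ≤ y i)
    (hymono : ∀ i, 1 ≤ i → i < n → y i ≤ y (i + 1))
    (histar1 : 1 ≤ istar) (histarn : istar ≤ n)
    (hopt : ∀ i, 1 ≤ i → i ≤ n →
      ((n : ℝ) - i + 1) * y i ≤ ((n : ℝ) - istar + 1) * y istar)
    (tstar : ℝ → ℝ) (htstar : ∀ x ∈ Set.Icc (0:ℝ) 1, tstar x = max 0 (x - y istar)) :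
    ∃ xs : ℕ → ℝ,
      (∀ i, 1 ≤ i → i ≤ n → xs i ∈ Set.Icc (0:ℝ) 1 ∧
        ∀ x ∈ Set.Icc (0:ℝ) 1, tstar x - c i x ≤ tstar (xs i) - c i (xs i)) ∧
      ∀ (t : ℝ → ℝ) (xs' : ℕ → ℝ), 0 ≤ t 0 →
        (∀ i, 1 ≤ i → i ≤ n → xs' i ∈ Set.Icc (0:ℝ) 1 ∧
          ∀ x ∈ Set.Icc (0:ℝ) 1, t x - c i x ≤ t (xs' i) - c i (xs' i)) →
        ∑ i ∈ Finset.Icc 1 n, (xs' i - t (xs' i)) ≤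
          (∑ k ∈ Finset.Icc 1 n, (1 : ℝ) / k) *
            ∑ i ∈ Finset.Icc 1 n, (xs i - tstar (xs i)) := by
  have hmono : MonotoneOn y (Set.Icc 1 n) :=
    monotoneOn_of_le_add_one Set.ordConnected_Icc fun i _ hi hi1 => hymono i hi.1 hi1.2
  have hstar : istar ∈ Set.Icc 1 n := ⟨histar1, histarn⟩
  set xs : ℕ → ℝ := fun i => if istar ≤ i then xm i else 0
  have hagent : ∀ i ∈ Icc 1 n, IsBestResponse (c i) tstar (xs i) ∧
      xs i - tstar (xs i) = if istar ≤ i then y istar else 0 := by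
    intro i hi
    obtain ⟨hi1, hin⟩ := mem_Icc.1 hi
    obtain ⟨hxm_mem, hxm_eq, hxm_max⟩ := hxm i hi1 hin
    simp only [xs]
    split_ifs with h
    · exact isBestResponse_and_payoff_of_le (hcnn i hi1 hin) htstar hxm_max
        (hmono hstar ⟨hi1, hin⟩ h) hxm_mem hxm_eq
    · exact isBestResponse_zero_and_payoff_of_ge (hcnn i hi1 hin) htstar hxm_max (hc0 i hi1 hin)
        (hmono ⟨hi1, hin⟩ hstar (by omega))
  refine ⟨xs, fun i hi1 hin => (hagent i (mem_Icc.2 ⟨hi1, hin⟩)).1, fun t xs' ht0 hbr => ?_⟩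
  calc ∑ i ∈ Icc 1 n, (xs' i - t (xs' i))
      ≤ ∑ i ∈ Icc 1 n, y i := sum_le_sum fun i hi =>
        have ⟨hi1, hin⟩ := mem_Icc.1 hi
        IsBestResponse.sub_le (hbr i hi1 hin) (hc0 i hi1 hin) ht0 (hxm i hi1 hin).2.2
    _ ≤ (∑ k ∈ Icc 1 n, (1 : ℝ) / k) * (((n : ℝ) - istar + 1) * y istar) :=
        sum_le_harmonic_mul fun i hi => hopt i (mem_Icc.1 hi).1 (mem_Icc.1 hi).2
    _ = (∑ k ∈ Icc 1 n, (1 : ℝ) / k) * ∑ i ∈ Icc 1 n, (xs i - tstar (xs i)) := by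
        rw [sum_congr rfl fun i hi => (hagent i hi).2, sum_Icc_ite_le_eq_mul histar1 (by omega)]

/-- With `y_1 ≤ … ≤ y_n`, `i*` maximizing `(n-i+1)·y_i`, and
`t*(x) = max(0, x - y_{i*})`, there exist best responses to `t*` under which the principal's
payoff is within a factor `Σ_{k=1}^n 1/k` (i.e. `O(log n)`) of the payoff obtained under any
payment function `t` with `t(0) ≥ 0` and any best responses to `t`. -/
theorem stmt_11 (n : ℕ) (hn : 1 ≤ n) (c : ℕ → ℝ → ℝ) (y xm : ℕ → ℝ) (istar : ℕ)
    (hc0 : ∀ i, 1 ≤ i → i ≤ n → c i 0 = 0)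
    (hcnn : ∀ i, 1 ≤ i → i ≤ n → ∀ x ∈ Set.Icc (0:ℝ) 1, 0 ≤ c i x)
    (hxm : ∀ i, 1 ≤ i → i ≤ n → xm i ∈ Set.Icc (0:ℝ) 1 ∧
      xm i - c i (xm i) = y i ∧ ∀ x ∈ Set.Icc (0:ℝ) 1, x - c i x ≤ y i)
    (hymono : ∀ i, 1 ≤ i → i < n → y i ≤ y (i + 1))
    (histar1 : 1 ≤ istar) (histarn : istar ≤ n)
    (hopt : ∀ i, 1 ≤ i → i ≤ n →
      ((n : ℝ) - i + 1) * y i ≤ ((n : ℝ) - istar + 1) * y istar)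
    (tstar : ℝ → ℝ) (htstar : ∀ x ∈ Set.Icc (0:ℝ) 1, tstar x = max 0 (x - y istar)) :
    ∃ xs : ℕ → ℝ,
      (∀ i, 1 ≤ i → i ≤ n → xs i ∈ Set.Icc (0:ℝ) 1 ∧
        ∀ x ∈ Set.Icc (0:ℝ) 1, tstar x - c i x ≤ tstar (xs i) - c i (xs i)) ∧
      ∀ (t : ℝ → ℝ) (xs' : ℕ → ℝ), 0 ≤ t 0 →
        (∀ i, 1 ≤ i → i ≤ n → xs' i ∈ Set.Icc (0:ℝ) 1 ∧
          ∀ x ∈ Set.Icc (0:ℝ) 1, t x - c i x ≤ t (xs' i) - c i (xs' i)) →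
        ∑ i ∈ Finset.Icc 1 n, (xs' i - t (xs' i)) ≤
          (∑ k ∈ Finset.Icc 1 n, (1 : ℝ) / k) *
            ∑ i ∈ Finset.Icc 1 n, (xs i - tstar (xs i)) :=
  stmt_11_general n c y xm istar hc0 hcnn hxm hymono histar1 histarn hopt tstar htstar
end

section
/- Consider a DA instance with n agents, actions 1,…,m with rewards ρ_j ≥ 0 and costs c_{i,j} ≥ 0, and let M > max_{i,j} { c_{i,j}, ρ_j }. Define z_0 = 0 and z_j = (ρ_j + jM)/(ρ_m + mM) for 1 ≤ j ≤ m; then 0 = z_0 < z_1 < … < z_m = 1. Define the RNA cost functions c_i(0) = 0 and c_i(x) = (c_{i,j} + jM)/(ρ_m + mM) for z_{j−1} < x ≤ z_j, and, for any DA payment profile (t'_1,…,t'_m), define the step payment function t'(0) = 0 and t'(x) = (t'_j + jM)/(ρ_m + mM) for z_{j−1} < x ≤ z_j. Then for every agent i and every action j ∈ {1,…,m}: (a) t'(z_j) − c_i(z_j) = (t'_j − c_{i,j})/(ρ_m + mM); (b) z_j − t'(z_j) = (ρ_j − t'_j)/(ρ_m + mM); and (c) for every x with z_{j−1} < x ≤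 z_j, t'(x) − c_i(x) = t'(z_j) − c_i(z_j) and x − t'(x) ≤ z_j − t'(z_j). In particular, every agent has a best response to t' of the form z_j for some j ∈ {0,…,m}, and agent utilities and per-agent principal payoffs at the points z_j equal the corresponding DA quantities divided by ρ_m + mM. -/
/-- The reduction from DA to RNA. With `z_0 = 0`,
`z_j = (ρ_j + jM)/(ρ_m + mM)`, step cost functions `c_i(x) = (c_{i,j} + jM)/(ρ_m + mM)` on
`(z_{j-1}, z_j]`, and step payment `t'(x) = (t'_j + jM)/(ρ_m + mM)` on `(z_{j-1}, z_j]`: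
the `z_j` are strictly increasing from 0 to 1, and (a) utilities, (b) per-agent principal
payoffs at the `z_j` equal the DA quantities divided by `ρ_m + mM`, while (c) on each interval
`(z_{j-1}, z_j]` the utility is constant and the principal payoff is maximized at `z_j`; hence
every agent has a best response of the form `z_j`. -/
theorem stmt_12 (n m : ℕ) (hm : 1 ≤ m) (ρ : ℕ → ℝ) (c : ℕ → ℕ → ℝ) (M : ℝ)
    (hρ : ∀ j, 1 ≤ j → j ≤ m → 0 ≤ ρ j)
    (hc : ∀ i, 1 ≤ i → i ≤ n → ∀ j, 1 ≤ j → j ≤ m → 0 ≤ c i j)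
    (hMρ : ∀ j, 1 ≤ j → j ≤ m → ρ j < M)
    (hMc : ∀ i, 1 ≤ i → i ≤ n → ∀ j, 1 ≤ j → j ≤ m → c i j < M)
    (z : ℕ → ℝ) (hz0 : z 0 = 0)
    (hz : ∀ j, 1 ≤ j → j ≤ m → z j = (ρ j + j * M) / (ρ m + m * M))
    (cR : ℕ → ℝ → ℝ) (hcR0 : ∀ i, 1 ≤ i → i ≤ n → cR i 0 = 0)
    (hcR : ∀ i, 1 ≤ i → i ≤ n → ∀ j, 1 ≤ j → j ≤ m → ∀ x, z (j - 1) < x → x ≤ z j →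
      cR i x = (c i j + j * M) / (ρ m + m * M))
    (tp : ℕ → ℝ)
    (tR : ℝ → ℝ) (htR0 : tR 0 = 0)
    (htR : ∀ j, 1 ≤ j → j ≤ m → ∀ x, z (j - 1) < x → x ≤ z j →
      tR x = (tp j + j * M) / (ρ m + m * M)) :
    (∀ j, 1 ≤ j → j ≤ m → z (j - 1) < z j) ∧ z m = 1 ∧
    (∀ i, 1 ≤ i → i ≤ n → ∀ j, 1 ≤ j → j ≤ m →
      (tR (z j) - cR i (z j) = (tp j - c i j) / (ρ m + m * M)) ∧
      (z j - tR (z j) = (ρ j - tp j) / (ρ m + m * M)) ∧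
      (∀ x, z (j - 1) < x → x ≤ z j →
        tR x - cR i x = tR (z j) - cR i (z j) ∧ x - tR x ≤ z j - tR (z j))) ∧
    (∀ i, 1 ≤ i → i ≤ n → ∃ j ≤ m,
      ∀ x ∈ Set.Icc (0:ℝ) 1, tR x - cR i x ≤ tR (z j) - cR i (z j)) := by

  have hρm : 0 ≤ ρ m := hρ m hm le_rfl
  have hM : 0 < M := lt_of_le_of_lt hρm (hMρ m hm le_rfl)
  have hm1 : (1:ℝ) ≤ (m:ℝ) := by exact_mod_cast hm
  have hD : 0 < ρ m + m * M := by nlinarith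
  have hzm : z m = 1 := by rw [hz m hm le_rfl]; exact div_self hD.ne'
  have hmono : ∀ j, 1 ≤ j → j ≤ m → z (j - 1) < z j := by
    intro j h1 h2
    rcases eq_or_lt_of_le h1 with h | h
    · subst h
      simp only [Nat.sub_self, hz0]
      rw [hz 1 le_rfl h2]
      have h1ρ : 0 ≤ ρ 1 := hρ 1 le_rfl h2
      apply div_pos (by push_cast; nlinarith) hD
    · have h1' : 1 ≤ j - 1 := by omega
      have h2' : j - 1 ≤ m := by omega
      rw [hz (j-1) h1' h2', hz j h1 h2, div_lt_div_iff_of_pos_right hD]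
      have hcast : ((j-1:ℕ):ℝ) = (j:ℝ) - 1 := by
        push_cast [Nat.cast_sub (by omega : 1 ≤ j)]; ring
      rw [hcast]
      have := hMρ (j-1) h1' h2'
      have := hρ j h1 h2
      nlinarith
  refine ⟨hmono, hzm, ?_, ?_⟩
  · intro i hi1 hi2 j hj1 hj2
    have htz := htR j hj1 hj2 (z j) (hmono j hj1 hj2) le_rfl
    have hcz := hcR i hi1 hi2 j hj1 hj2 (z j) (hmono j hj1 hj2) le_rfl
    refine ⟨by rw [htz, hcz]; ring, by rw [htz, hz j hj1 hj2]; ring, ?_⟩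
    intro x hx1 hx2
    have htx := htR j hj1 hj2 x hx1 hx2
    have hcx := hcR i hi1 hi2 j hj1 hj2 x hx1 hx2
    exact ⟨by rw [htx, hcx, htz, hcz], by rw [htx, htz]; linarith⟩
  · intro i hi1 hi2
    obtain ⟨j0, hj0mem, hj0max⟩ := Finset.exists_max_image (Finset.range (m+1))
      (fun j => tR (z j) - cR i (z j)) ⟨0, Finset.mem_range.2 (Nat.succ_pos m)⟩
    refine ⟨j0, Nat.lt_succ_iff.1 (Finset.mem_range.1 hj0mem), ?_⟩
    intro x hx
    rcases eq_or_lt_of_le hx.1 with h0 | h0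
    · have heq : tR x - cR i x = tR (z 0) - cR i (z 0) := by
        rw [← h0, hz0, htR0, hcR0 i hi1 hi2]
      rw [heq]
      exact hj0max 0 (Finset.mem_range.2 (Nat.succ_pos m))
    · have hxm : x ≤ z m := by rw [hzm]; exact hx.2
      have hex : ∃ j, x ≤ z j := ⟨m, hxm⟩
      set j := Nat.find hex with hjdef
      have hxj : x ≤ z j := Nat.find_spec hex
      have hjm : j ≤ m := Nat.find_min' hex hxm
      have hj1 : 1 ≤ j := by
        by_contra h
        have hj0 : j = 0 := by omega
        rw [hj0, hz0] at hxj; linarith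
      have hlt : z (j-1) < x := by
        have hmin := Nat.find_min hex (show j - 1 < j by omega)
        push_neg at hmin
        exact hmin
      have htx := htR j hj1 hjm x hlt hxj
      have hcx := hcR i hi1 hi2 j hj1 hjm x hlt hxj
      have htz := htR j hj1 hjm (z j) (hmono j hj1 hjm) le_rfl
      have hcz := hcR i hi1 hi2 j hj1 hjm (z j) (hmono j hj1 hjm) le_rfl
      have heq : tR x - cR i x = tR (z j) - cR i (z j) := by rw [htx, hcx, htz, hcz]
      rw [heq]
      exact hj0max j (Finset.mem_range.2 (by omega))
end
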